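/- Let m ≥ 1 and let X₁, …, X_m be elements of a commutative ring. The determinant of the 2m×2m matrix [A₁; A₂] with A₁ = [Xᵢ^{j−1}] and A₂ = [j·Xᵢ^{j−1}] is, up to the sign (−1)^{m(m−1)/2}, equal to (∏ᵢ Xᵢ) times the square of the square of the Vandermonde determinant: det A = (−1)^{m(m−1)/2} (∏_{i=1}^m Xᵢ) · (det V)⁴ where V = [Xᵢ^{j−1}]_{1≤i,j≤m}. -/

import Mathlib

/-!
Each lower row `((j + 1) x_i^j)_j` is `x_i` times the derivative row `(j x_i^(j-1))_j` plus the
upper row `(x_i^j)_j`, so the determinant is `∏ x_i` times that of the confluent Vandermonde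
matrix `C(x)`. To evaluate `det C(x)`, take over `R[t]` the Vandermonde matrix of the `2m` points
`x_1, …, x_m, x_1 + t, …, x_m + t`. Subtracting the upper rows from the lower ones and dividing
by `t` yields a matrix of divided differences which specialises to `C(x)` at `t = 0`, while the
product formula gives the determinant `t^m V(x)^2 ∏_{i ≠ j} (x_j + t - x_i)`. Since `t^m` is a
non-zero-divisor it cancels, and `t = 0` gives
`det C(x) = V(x)^2 ∏_{i ≠ j} (x_j - x_i) = (-1)^(m(m-1)/2) V(x)^4`.
-/

open Finset Matrix

namespace Matrix

variable {R : Type*} [CommRing R]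

theorem det_vandermonde_eq_prod_prod_ite {n : ℕ} (v : Fin n → R) :
    (vandermonde v).det = ∏ i, ∏ j, if i < j then v j - v i else 1 := by
  simp [det_vandermonde, ← prod_filter, filter_lt_eq_Ioi]

theorem det_vandermonde_append {a b : ℕ} (u : Fin a → R) (v : Fin b → R) :
    (vandermonde (Fin.append u v)).det =
      (vandermonde u).det * (vandermonde v).det * ∏ i, ∏ j, (v j - u i) := by
  have castAdd_lt_castAdd (i j : Fin a) : Fin.castAdd b i < Fin.castAdd b j ↔ i < j := by
    simp only [Fin.lt_def, Fin.val_castAdd]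
  have castAdd_lt_natAdd (i : Fin a) (j : Fin b) : Fin.castAdd b i < Fin.natAdd a j := by
    simp only [Fin.lt_def, Fin.val_castAdd, Fin.val_natAdd]
    omega
  have not_natAdd_lt_castAdd (i : Fin a) (j : Fin b) : ¬ Fin.natAdd a j < Fin.castAdd b i :=
    (castAdd_lt_natAdd i j).asymm
  simp only [det_vandermonde_eq_prod_prod_ite, Fin.prod_univ_add, Fin.append_left,
    Fin.append_right, Fin.natAdd_lt_natAdd_iff, castAdd_lt_castAdd, castAdd_lt_natAdd,
    not_natAdd_lt_castAdd, if_true, if_false, prod_const_one, mul_one, prod_mul_distrib]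
  ring

theorem det_vandermonde_append_add {m : ℕ} (v : Fin m → R) (a : R) :
    (vandermonde (Fin.append v fun i ↦ v i + a)).det =
      a ^ m * (vandermonde v).det ^ 2 * ∏ i, ∏ j ∈ univ.erase i, (v j + a - v i) := by
  have diagonal_factor (i : Fin m) :
      ∏ j, (v j + a - v i) = a * ∏ j ∈ univ.erase i, (v j + a - v i) := by
    rw [← mul_prod_erase univ _ (mem_univ i), add_sub_cancel_left]
  simp only [det_vandermonde_append, det_vandermonde_add, diagonal_factor, prod_mul_distrib,
    prod_const, card_univ, Fintype.card_fin]
  ring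

theorem prod_prod_erase_sub_eq_det_vandermonde_sq {n : ℕ} (v : Fin n → R) :
    ∏ i, ∏ j ∈ univ.erase i, (v j - v i) =
      (-1) ^ (n * (n - 1) / 2) * (vandermonde v).det ^ 2 := by
  have split (i j : Fin n) : (if j ≠ i then v j - v i else 1) =
      (if i < j then v j - v i else 1) *
        ((if j < i then -1 else 1) * (if j < i then v i - v j else 1)) := by
    rcases lt_trichotomy i j with h | rfl | h
    · simp [h, h.ne', h.asymm]
    · simp
    · simp [h, h.ne, h.asymm]
  have sign : ∏ i : Fin n, ∏ j : Fin n, (if j < i then (-1 : R) else 1) =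
      (-1) ^ (n * (n - 1) / 2) := by
    simp only [prod_ite, prod_const_one, mul_one, prod_const, filter_gt_eq_Iio, Fin.card_Iio,
      prod_pow_eq_pow_sum]
    rw [Fin.sum_univ_eq_sum_range (fun i ↦ i) n, sum_range_id]
  have swap : ∏ i : Fin n, ∏ j : Fin n, (if j < i then v i - v j else 1) =
      (vandermonde v).det := by
    rw [det_vandermonde_eq_prod_prod_ite, prod_comm]
  calc ∏ i, ∏ j ∈ univ.erase i, (v j - v i)
      = ∏ i, ∏ j, if j ≠ i then v j - v i else 1 := by simp only [← filter_ne', prod_filter]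
    _ = (-1) ^ (n * (n - 1) / 2) * (vandermonde v).det ^ 2 := by
      simp only [split, prod_mul_distrib, sign, swap, ← det_vandermonde_eq_prod_prod_ite]
      ring

theorem det_submatrix_fromRows_diagonal_mul_add {ι n : Type*} [Fintype ι] [DecidableEq ι]
    [Fintype n] [DecidableEq n] (e : n ≃ ι ⊕ ι) (A B : Matrix ι n R) (c : ι → R) :
    ((fromRows A (diagonal c * B + A)).submatrix e id).det =
      (∏ i, c i) * ((fromRows A B).submatrix e id).det := by
  have hfactor : fromRows A (diagonal c * B + A) =
      (fromBlocks 1 0 1 (diagonal c) : Matrix (ι ⊕ ι) (ι ⊕ ι) R) * fromRows A B := by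
    rw [fromBlocks_mul_fromRows]
    simp [add_comm]
  rw [hfactor, ← submatrix_mul_equiv _ _ e e id, det_mul, det_submatrix_equiv_self,
    det_fromBlocks_zero₁₂, det_one, one_mul, det_diagonal]

theorem vandermonde_append {a b : ℕ} (u : Fin a → R) (v : Fin b → R) :
    vandermonde (Fin.append u v) =
      (fromRows (rectVandermonde u 1 (a + b)) (rectVandermonde v 1 (a + b))).submatrix
        finSumFinEquiv.symm id := by
  ext r j
  refine Fin.addCases (fun i ↦ ?_) (fun i ↦ ?_) r <;>
    simp [rectVandermonde_apply, -Fin.natAdd_eq_addNat]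

def confluentVandermonde {m : ℕ} (x : Fin m → R) : Matrix (Fin (m + m)) (Fin (m + m)) R :=
  (fromRows (rectVandermonde x 1 (m + m))
    (of fun i j ↦ ((j : ℕ) : R) * x i ^ ((j : ℕ) - 1))).submatrix finSumFinEquiv.symm id

section Polynomial

open Polynomial

noncomputable def dividedDifferenceVandermonde {m : ℕ} (x : Fin m → R) :
    Matrix (Fin (m + m)) (Fin (m + m)) R[X] :=
  (fromRows (rectVandermonde (fun i ↦ C (x i)) 1 (m + m))
    (of fun i j ↦ divX ((C (x i) + X) ^ (j : ℕ)))).submatrix finSumFinEquiv.symm id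

theorem det_dividedDifferenceVandermonde {m : ℕ} (x : Fin m → R) :
    (dividedDifferenceVandermonde x).det =
      (vandermonde fun i ↦ C (x i)).det ^ 2 *
        ∏ i, ∏ j ∈ univ.erase i, (C (x j) + X - C (x i)) := by
  have hrows : rectVandermonde (fun i ↦ C (x i) + X) 1 (m + m) =
      (diagonal fun _ ↦ X : Matrix (Fin m) (Fin m) R[X]) *
          (of fun i (j : Fin (m + m)) ↦ divX ((C (x i) + X) ^ (j : ℕ))) +
        rectVandermonde (fun i ↦ C (x i)) 1 (m + m) := by
    ext i j : 1
    conv_lhs => rw [rectVandermonde_apply, ← X_mul_divX_add ((C (x i) + X) ^ (j : ℕ))]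
    simp [rectVandermonde_apply, coeff_zero_eq_eval_zero]
  have h := det_vandermonde_append_add (fun i ↦ C (x i)) X
  rw [vandermonde_append, hrows, det_submatrix_fromRows_diagonal_mul_add, prod_const, card_univ,
    Fintype.card_fin, mul_assoc] at h
  exact (isRegular_X_pow m).left h

theorem mapMatrix_constantCoeff_dividedDifferenceVandermonde {m : ℕ} (x : Fin m → R) :
    constantCoeff.mapMatrix (dividedDifferenceVandermonde x) = confluentVandermonde x := by
  ext r j : 1
  simp only [RingHom.mapMatrix_apply, map_apply, dividedDifferenceVandermonde,
    confluentVandermonde, submatrix_apply]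
  rcases finSumFinEquiv.symm r with i | i
  · simp [rectVandermonde_apply, constantCoeff_apply, coeff_zero_eq_eval_zero]
  · simp only [fromRows_apply_inr, of_apply, id, constantCoeff_apply, coeff_divX, zero_add,
      add_comm (C _), coeff_X_add_C_pow, Nat.choose_one_right]
    ring

theorem det_confluentVandermonde {m : ℕ} (x : Fin m → R) :
    (confluentVandermonde x).det = (-1) ^ (m * (m - 1) / 2) * (vandermonde x).det ^ 4 := by
  have hvand : constantCoeff (vandermonde fun i ↦ C (x i)).det = (vandermonde x).det := by
    rw [RingHom.map_det]
    congr 1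
    ext i j : 1
    simp [constantCoeff_apply, coeff_zero_eq_eval_zero]
  rw [← mapMatrix_constantCoeff_dividedDifferenceVandermonde, ← RingHom.map_det,
    det_dividedDifferenceVandermonde]
  simp only [map_mul, map_pow, map_prod, map_sub, map_add, hvand, constantCoeff_apply,
    coeff_C_zero, coeff_X_zero, add_zero, prod_prod_erase_sub_eq_det_vandermonde_sq]
  ring

end Polynomial

end Matrix

theorem det_confluent_vandermonde_pow_four {R : Type*} [CommRing R] (m : ℕ)
    (X : Fin m → R) :
    Matrix.det (Matrix.of fun i j : Fin (2 * m) =>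
      if h : (i : ℕ) < m then X ⟨i, h⟩ ^ (j : ℕ)
      else (((j : ℕ) + 1 : ℕ) : R) * X ⟨(i : ℕ) - m, by have := i.isLt; omega⟩ ^ (j : ℕ))
    = (-1) ^ (m * (m - 1) / 2) * (∏ i, X i) *
        (Matrix.det (Matrix.of fun i j : Fin m => X i ^ (j : ℕ))) ^ 4 := by
  have hrows : (of fun i (j : Fin (m + m)) ↦ ((j : ℕ) + 1 : R) * X i ^ (j : ℕ)) =
      (diagonal X : Matrix (Fin m) (Fin m) R) *
          (of fun i (j : Fin (m + m)) ↦ ((j : ℕ) : R) * X i ^ ((j : ℕ) - 1)) +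
        rectVandermonde X 1 (m + m) := by
    ext i j
    rcases eq_or_ne (j : ℕ) 0 with hj | hj
    · simp [rectVandermonde_apply, hj]
    · simp only [of_apply, diagonal_mul, Matrix.add_apply, rectVandermonde_apply, Pi.one_apply,
        one_pow, mul_one]
      rw [mul_left_comm, mul_pow_sub_one hj]
      ring
  calc _ = ((fromRows (rectVandermonde X 1 (m + m))
          (of fun i (j : Fin (m + m)) ↦ ((j : ℕ) + 1 : R) * X i ^ (j : ℕ))).submatrix
            finSumFinEquiv.symm id).det := by
        rw [← det_submatrix_equiv_self (finCongr (two_mul m))]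
        congr 1
        ext r j
        obtain ⟨s, rfl⟩ := (finSumFinEquiv.trans (finCongr (two_mul m).symm)).surjective r
        rcases s with i | i <;> simp [rectVandermonde_apply, -Fin.natAdd_eq_addNat]
    _ = (∏ i, X i) * (confluentVandermonde X).det := by
        rw [hrows, det_submatrix_fromRows_diagonal_mul_add, confluentVandermonde]
    _ = _ := by
        rw [det_confluentVandermonde, vandermonde]
        ring
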